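/- On the directed path digraph with vertices v₁, ..., v_m and arcs (v_{i+1}, v_i), if k agents occupy vertices v_{i₁} < ... < v_{i_k} and their destinations are v_{i₁ − n} < ... < v_{i_k − n} (all indices ≥ 1), then the instance is solvable, and a solution needs exactly k·n moves. -/
import Mathlib


/-- One legal diMAPF move: some agent `r` moves along an arc to an unoccupied
vertex. -/
def Move {R V : Type*} [DecidableEq R] (A : V → V → Prop) (s s' : R → V) : Prop :=
  ∃ (r : R) (v : V), A (s r) v ∧ (∀ r' : R, s r' ≠ v) ∧ s' = Function.update s r v

/-- The directed path digraph on `m` vertices: an arc from `v_{i+1}` to `v_i`. -/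
def PathArc (m : ℕ) (u v : Fin m) : Prop := (u : ℕ) = (v : ℕ) + 1

/-- On the directed path digraph, if `k` agents must each shift `n` positions
toward `v₁` (all target indices valid), then the instance is solvable, and a
solution needs exactly `k * n` moves: some solution of length `k * n` exists
and every solution has length at least `k * n`. -/
theorem stmt_12 {R : Type*} [DecidableEq R] [Fintype R] (m n : ℕ)
    (s t : R → Fin m) (hs : Function.Injective s)
    (hn : ∀ r : R, n ≤ (s r : ℕ)) (ht : ∀ r : R, (t r : ℕ) = (s r : ℕ) - n) :
    (∃ σ : Fin (Fintype.card R * n + 1) → R → Fin m,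
        σ 0 = s ∧ σ (Fin.last (Fintype.card R * n)) = t ∧
        ∀ i : Fin (Fintype.card R * n), Move (PathArc m) (σ i.castSucc) (σ i.succ)) ∧
    (∀ (N : ℕ) (σ : Fin (N + 1) → R → Fin m),
        σ 0 = s → σ (Fin.last N) = t →
        (∀ i : Fin N, Move (PathArc m) (σ i.castSucc) (σ i.succ)) →
        Fintype.card R * n ≤ N) := by
  classical
  constructor
  · -- existence
    letI : LinearOrder R := LinearOrder.lift' s hs
    have hle : ∀ a b : R, a ≤ b ↔ s a ≤ s b := fun a b => Iff.rfl
    have hlt : ∀ a b : R, a < b ↔ (s a : ℕ) < (s b : ℕ) := by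
      intro a b
      rw [lt_iff_le_not_ge, hle, hle, Fin.le_def, Fin.le_def]
      omega
    let e : Fin (Fintype.card R) ≃o R := Fintype.orderIsoFinOfCardEq R rfl
    let idx : R → ℕ := fun r => (e.symm r : ℕ)
    have hidn : ∀ r, idx r < Fintype.card R := fun r => (e.symm r).isLt
    have hmono : ∀ a b : R, idx a < idx b ↔ (s a : ℕ) < (s b : ℕ) := by
      intro a b
      rw [← hlt]
      exact (Fin.lt_def.symm.trans (e.symm.lt_iff_lt : e.symm a < e.symm b ↔ a < b))
    have hidxinj : ∀ a b : R, idx a = idx b → a = b := by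
      intro a b h
      exact e.symm.injective (Fin.ext h)
    let pos : ℕ → R → ℕ := fun c r => (s r : ℕ) - min (c - idx r * n) n
    have hposlt : ∀ c r, pos c r < m := fun c r =>
      lt_of_le_of_lt (Nat.sub_le _ _) (s r).isLt
    refine ⟨fun c r => ⟨pos (c : ℕ) r, hposlt _ _⟩, ?_, ?_, ?_⟩
    · funext r; apply Fin.ext
      show pos ((0 : Fin (Fintype.card R * n + 1)) : ℕ) r = (s r : ℕ)
      simp [pos]
    · funext r; apply Fin.ext
      show pos ((Fin.last (Fintype.card R * n)) : ℕ) r = (t r : ℕ)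
      rw [ht r, Fin.val_last]
      have h1 : idx r * n + n ≤ Fintype.card R * n := by
        have h2 : (idx r + 1) * n ≤ Fintype.card R * n := Nat.mul_le_mul_right n (hidn r)
        rw [Nat.succ_mul] at h2; exact h2
      show (s r : ℕ) - min (Fintype.card R * n - idx r * n) n = (s r : ℕ) - n
      omega
    · intro i
      set c := (i : ℕ) with hcdef
      have hclt : c < Fintype.card R * n := i.isLt
      have hn0 : 0 < n := by
        rcases Nat.eq_zero_or_pos n with h | h
        · subst h; rw [Nat.mul_zero] at hclt; omega
        · exact h
      set j := c / n with hjdef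
      set d := c % n with hddef
      have hj : j < Fintype.card R := (Nat.div_lt_iff_lt_mul hn0).mpr hclt
      have hd : d < n := Nat.mod_lt _ hn0
      have hcd : j * n + d = c := by
        have := Nat.div_add_mod c n
        rw [Nat.mul_comm] at this
        exact this
      set r₀ := e ⟨j, hj⟩ with hr0
      have hidx0 : idx r₀ = j := by
        show ((e.symm (e ⟨j, hj⟩)) : ℕ) = j
        rw [e.symm_apply_apply]
      have hnr0 : n ≤ (s r₀ : ℕ) := hn r₀
      have hv : (s r₀ : ℕ) - (d + 1) < m := lt_of_le_of_lt (Nat.sub_le _ _) (s r₀).isLt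
      have hposc : pos c r₀ = (s r₀ : ℕ) - d := by
        show (s r₀ : ℕ) - min (c - idx r₀ * n) n = (s r₀ : ℕ) - d
        rw [hidx0]
        omega
      have hposc1 : pos (c + 1) r₀ = (s r₀ : ℕ) - (d + 1) := by
        show (s r₀ : ℕ) - min (c + 1 - idx r₀ * n) n = (s r₀ : ℕ) - (d + 1)
        rw [hidx0]
        omega
      have hsucc : (i.succ : ℕ) = c + 1 := rfl
      have hcast : (i.castSucc : ℕ) = c := rfl
      refine ⟨r₀, ⟨(s r₀ : ℕ) - (d + 1), hv⟩, ?_, ?_, ?_⟩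
      · show pos ((i.castSucc : Fin (Fintype.card R * n + 1)) : ℕ) r₀ =
          ((s r₀ : ℕ) - (d + 1)) + 1
        rw [hcast, hposc]
        omega
      · intro r'
        apply Fin.ne_of_val_ne
        show pos ((i.castSucc : Fin (Fintype.card R * n + 1)) : ℕ) r' ≠ (s r₀ : ℕ) - (d + 1)
        rw [hcast]
        rcases lt_trichotomy (idx r') j with hlt' | heq' | hgt'
        · have hs' : (s r' : ℕ) < (s r₀ : ℕ) := by
            rw [← hmono]; omega
          have hnr' : n ≤ (s r' : ℕ) := hn r'
          have h2 : idx r' * n + n ≤ j * n := by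
            have h3 : (idx r' + 1) * n ≤ j * n := Nat.mul_le_mul_right n hlt'
            rw [Nat.succ_mul] at h3; exact h3
          show (s r' : ℕ) - min (c - idx r' * n) n ≠ (s r₀ : ℕ) - (d + 1)
          omega
        · have hrr : r' = r₀ := hidxinj _ _ (by rw [hidx0]; exact heq')
          rw [hrr]
          rw [hposc]
          omega
        · have hs' : (s r₀ : ℕ) < (s r' : ℕ) := by
            rw [← hmono]; omega
          have h2 : j * n + n ≤ idx r' * n := by
            have h3 : (j + 1) * n ≤ idx r' * n := Nat.mul_le_mul_right n hgt'
            rw [Nat.succ_mul] at h3; exact h3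
          show (s r' : ℕ) - min (c - idx r' * n) n ≠ (s r₀ : ℕ) - (d + 1)
          omega
      · funext r'
        rcases eq_or_ne r' r₀ with h | h
        · rw [h, Function.update_self]
          apply Fin.ext
          show pos ((i.succ : Fin (Fintype.card R * n + 1)) : ℕ) r₀ = (s r₀ : ℕ) - (d + 1)
          rw [hsucc, hposc1]
        · rw [Function.update_of_ne h]
          apply Fin.ext
          show pos ((i.succ : Fin (Fintype.card R * n + 1)) : ℕ) r' =
            pos ((i.castSucc : Fin (Fintype.card R * n + 1)) : ℕ) r'
          rw [hsucc, hcast]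
          have hne : idx r' ≠ j := fun hh => h (hidxinj _ _ (by rw [hidx0]; exact hh))
          rcases lt_or_gt_of_ne hne with hlt' | hgt'
          · have h2 : idx r' * n + n ≤ j * n := by
              have h3 : (idx r' + 1) * n ≤ j * n := Nat.mul_le_mul_right n hlt'
              rw [Nat.succ_mul] at h3; exact h3
            show (s r' : ℕ) - min (c + 1 - idx r' * n) n = (s r' : ℕ) - min (c - idx r' * n) n
            omega
          · have h2 : j * n + n ≤ idx r' * n := by
              have h3 : (j + 1) * n ≤ idx r' * n := Nat.mul_le_mul_right n hgt'
              rw [Nat.succ_mul] at h3; exact h3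
            show (s r' : ℕ) - min (c + 1 - idx r' * n) n = (s r' : ℕ) - min (c - idx r' * n) n
            omega
  · -- lower bound
    intro N σ h0 hlast hmove
    have step : ∀ i : Fin N,
        (∑ r', (σ i.succ r' : ℕ)) + 1 = ∑ r', (σ i.castSucc r' : ℕ) := by
      intro i
      obtain ⟨r, v, harc, hfree, hupd⟩ := hmove i
      rw [hupd]
      have hcomp : ∀ r', ((Function.update (σ i.castSucc) r v) r' : ℕ) =
          Function.update (fun x => ((σ i.castSucc x : ℕ))) r (v : ℕ) r' := by
        intro r'
        rcases eq_or_ne r' r with h | h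
        · rw [h, Function.update_self, Function.update_self]
        · rw [Function.update_of_ne h, Function.update_of_ne h]
      rw [Finset.sum_congr rfl (fun r' _ => hcomp r'),
        Finset.sum_update_of_mem (Finset.mem_univ r),
        Finset.sum_eq_sum_sdiff_singleton_add (Finset.mem_univ r)
          (fun x => ((σ i.castSucc x : ℕ)))]
      have harc' : (σ i.castSucc r : ℕ) = (v : ℕ) + 1 := harc
      omega
    have key : ∀ x : Fin (N + 1), (∑ r', (σ x r' : ℕ)) + (x : ℕ) = ∑ r', (σ 0 r' : ℕ) := by
      intro x
      induction x using Fin.induction with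
      | zero => simp
      | succ i ih =>
        have h1 := step i
        have h2 : (i.succ : ℕ) = (i.castSucc : ℕ) + 1 := by simp
        omega
    have hkey := key (Fin.last N)
    rw [hlast, h0, Fin.val_last] at hkey
    have hsum2 : ∑ r, (s r : ℕ) = (∑ r, (t r : ℕ)) + Fintype.card R * n := by
      have hsn : ∀ r, (s r : ℕ) = (t r : ℕ) + n := by
        intro r; have := ht r; have := hn r; omega
      calc ∑ r, (s r : ℕ) = ∑ r, ((t r : ℕ) + n) := Finset.sum_congr rfl (fun r _ => hsn r)
        _ = (∑ r, (t r : ℕ)) + Fintype.card R * n := by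
            rw [Finset.sum_add_distrib, Finset.sum_const, Finset.card_univ, smul_eq_mul]
    omega
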